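/- Let ζ be a random variable with E[ζ] = 0, E[ζ²] = 1, and E[ζ⁴] ≤ C for some constant C ≥ 1 (uniform fourth-moment bound). Then for any reals m and r > 0, Var(log r − r(ζ − m)² + ζ²) ≤ (2C − 1)(1 − r)² + 4(C + 1)m²r². -/

import Mathlib

/-!
The summand is the quadratic `(1 - r) ζ² + 2 m r ζ + (log r - r m²)` in `ζ`. The constant drops
out of the variance and `2ab ≤ a² + b²` splits the rest, giving
`Var ≤ 2 (1 - r)² Var[ζ²] + 8 m² r² Var[ζ] = 2 (1 - r)² (E[ζ⁴] - 1) + 8 m² r²`,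
which is at most the claimed bound because `C ≥ 1`.
-/

open MeasureTheory ProbabilityTheory

section

variable {Ω : Type*} [MeasurableSpace Ω] {μ : Measure Ω} {X Y : Ω → ℝ}

namespace MeasureTheory

lemma MemLp.integrable_pow_four (hX : MemLp X 4 μ) : Integrable (fun ω => X ω ^ 4) μ := by
  have h := (show MemLp X ((4 : ℕ) : ENNReal) μ from mod_cast hX).integrable_norm_pow
    (by norm_num)
  simpa only [Real.norm_eq_abs, pow_abs, abs_pow, Even.pow_abs ⟨2, rfl⟩] using h

lemma MemLp.memLp_two_sq (hX : MemLp X 4 μ) : MemLp (fun ω => X ω ^ 2) 2 μ := by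
  have hmeas := hX.aestronglyMeasurable
  rw [memLp_two_iff_integrable_sq (by fun_prop)]
  simpa only [← pow_mul] using hX.integrable_pow_four

end MeasureTheory

namespace ProbabilityTheory

lemma variance_add_le_two_mul [IsFiniteMeasure μ] (hX : MemLp X 2 μ) (hY : MemLp Y 2 μ) :
    Var[X + Y; μ] ≤ 2 * (Var[X; μ] + Var[Y; μ]) := by
  have hsub := variance_nonneg (X - Y) μ
  rw [variance_sub hX hY] at hsub
  rw [variance_add hX hY]
  linarith

lemma variance_sq_eq_sub [IsProbabilityMeasure μ] (hX : MemLp X 4 μ) :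
    Var[fun ω => X ω ^ 2; μ] = ∫ ω, X ω ^ 4 ∂μ - (∫ ω, X ω ^ 2 ∂μ) ^ 2 := by
  rw [variance_eq_sub hX.memLp_two_sq]
  simp only [Pi.pow_apply, ← pow_mul]

lemma variance_quadratic_le [IsProbabilityMeasure μ] (hX : MemLp X 4 μ) (a b c : ℝ) :
    Var[fun ω => a * X ω ^ 2 + b * X ω + c; μ] ≤
      2 * (a ^ 2 * Var[fun ω => X ω ^ 2; μ] + b ^ 2 * Var[X; μ]) := by
  have hX2 : MemLp X 2 μ := hX.mono_exponent (by norm_num)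
  have hmeas := hX.aestronglyMeasurable
  rw [variance_add_const (by fun_prop), ← variance_const_mul, ← variance_const_mul]
  exact variance_add_le_two_mul (hX.memLp_two_sq.const_mul a) (hX2.const_mul b)

end ProbabilityTheory

end

theorem stmt_5_general {Ω : Type*} [MeasurableSpace Ω] (μ : Measure Ω) [IsProbabilityMeasure μ]
    (ζ : Ω → ℝ)
    (hζ4 : MemLp ζ 4 μ)
    (hmean : ∫ ω, ζ ω ∂μ = 0) (hvar : ∫ ω, (ζ ω) ^ 2 ∂μ = 1)
    (C : ℝ) (hC : 1 ≤ C) (hmom4 : ∫ ω, (ζ ω) ^ 4 ∂μ ≤ C)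
    (m r : ℝ) :
    variance (fun ω => Real.log r - r * (ζ ω - m) ^ 2 + (ζ ω) ^ 2) μ ≤
      (2 * C - 1) * (1 - r) ^ 2 + 4 * (C + 1) * m ^ 2 * r ^ 2 := by
  have hquad : (fun ω => Real.log r - r * (ζ ω - m) ^ 2 + (ζ ω) ^ 2) =
      fun ω => (1 - r) * ζ ω ^ 2 + 2 * m * r * ζ ω + (Real.log r - r * m ^ 2) := by
    funext ω; ring
  have hvarζ : Var[ζ; μ] = 1 := by
    rw [variance_eq_sub (hζ4.mono_exponent (by norm_num))]
    simp only [Pi.pow_apply, hvar, hmean]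
    norm_num
  have hvarζ2 : Var[fun ω => ζ ω ^ 2; μ] ≤ C - 1 := by
    rw [variance_sq_eq_sub hζ4, hvar]
    linarith
  rw [hquad]
  refine (variance_quadratic_le hζ4 _ _ _).trans ?_
  rw [hvarζ]
  nlinarith [sq_nonneg (1 - r), sq_nonneg (m * r),
    mul_le_mul_of_nonneg_left hvarζ2 (sq_nonneg (1 - r))]

/-- If `E[ζ] = 0`, `E[ζ²] = 1` and `E[ζ⁴] ≤ C` with `C ≥ 1`, then for any `m` and `r > 0`,
`Var(log r − r(ζ − m)² + ζ²) ≤ (2C − 1)(1 − r)² + 4(C + 1)m²r²`. -/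
theorem stmt_5 {Ω : Type*} [MeasurableSpace Ω] (μ : Measure Ω) [IsProbabilityMeasure μ]
    (ζ : Ω → ℝ) (hζmeas : Measurable ζ)
    (hζ4 : MemLp ζ 4 μ)
    (hmean : ∫ ω, ζ ω ∂μ = 0) (hvar : ∫ ω, (ζ ω) ^ 2 ∂μ = 1)
    (C : ℝ) (hC : 1 ≤ C) (hmom4 : ∫ ω, (ζ ω) ^ 4 ∂μ ≤ C)
    (m r : ℝ) (hr : 0 < r) :
    variance (fun ω => Real.log r - r * (ζ ω - m) ^ 2 + (ζ ω) ^ 2) μ ≤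
      (2 * C - 1) * (1 - r) ^ 2 + 4 * (C + 1) * m ^ 2 * r ^ 2 :=
  stmt_5_general μ ζ hζ4 hmean hvar C hC hmom4 m r
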